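/- Let E, z₀, ζ₀ ∈ ℂ and set c = E/4 + (z₀ − ζ₀)/(8i). Define coefficients A : ℤ × ℤ → ℂ by A_{0,0} = 1, A_{i,j} = 0 whenever i ≤ 0 or j ≤ 0 with (i,j) ≠ (0,0), and for all integers i, j ≥ 1 by the recurrence i·j·A_{i,j} + c·A_{i−1,j−1} − (1/(8i))·A_{i−1,j−2} + (1/(8i))·A_{i−2,j−1} = 0 (where the 'i' in 1/(8i) is the imaginary unit). Then for every u, v ∈ ℂ the family ( A_{i,j}·u^i·v^j )_{(i,j) ∈ ℕ×ℕ} is absolutely summable; in particular the double power series 1 + Σ_{i≥1} Σ_{j≥1} A_{i,j}·(z−z₀)^i·(ζ−ζ₀)^j defining the Riemann function of the gravity Helmholtz operator converges for all z, ζ ∈ ℂ. -/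

import Mathlib

/-!
Dividing the recurrence by `i * j` shows that each step from `(i - 1, j - 1)`, `(i - 1, j - 2)`
or `(i - 2, j - 1)` to `(i, j)` gains a factor `1 / (i * j)`. Since every step lowers each index
by at most two, strong induction on `i + j` gives
`‖A i j‖ ≤ ‖A 0 0‖ * M ^ (i + j) / (⌊i/2⌋! * ⌊j/2⌋!)` as soon as `1 ≤ M` and
`‖c‖ + 2‖k‖ ≤ M²`. The majorant `∑ x ^ n / ⌊n/2⌋!` converges for every `x`, its even and odd
parts being exponential series in `x²`.
-/

open Nat

def halfFactorial (n : ℕ) : ℕ := (n / 2)!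

lemma halfFactorial_pos (n : ℕ) : 0 < halfFactorial n := factorial_pos _

lemma halfFactorial_le_mul_sub_two {n : ℕ} (hn : 1 ≤ n) :
    halfFactorial n ≤ n * halfFactorial (n - 2) := by
  obtain _ | _ | n := n
  · omega
  · simp [halfFactorial]
  · have h : (n + 2) / 2 = n / 2 + 1 := by omega
    simp only [halfFactorial, h, factorial_succ]
    exact Nat.mul_le_mul_right _ (by omega)

lemma halfFactorial_le_mul_sub_one {n : ℕ} (hn : 1 ≤ n) :
    halfFactorial n ≤ n * halfFactorial (n - 1) :=
  (halfFactorial_le_mul_sub_two hn).trans <|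
    Nat.mul_le_mul_left _ <| factorial_le <| Nat.div_le_div_right <| by omega

lemma summable_pow_div_halfFactorial (x : ℝ) :
    Summable fun n ↦ x ^ n / halfFactorial n := by
  have h := Real.summable_pow_div_factorial (x ^ 2)
  refine Summable.even_add_odd ?_ ?_
  · simpa [halfFactorial, pow_mul] using h
  · refine (h.mul_left x).congr fun k ↦ ?_
    have hk : (2 * k + 1) / 2 = k := by omega
    simp only [halfFactorial, hk, pow_succ, pow_mul]
    ring

structure RiemannCoeffs {𝕜 : Type*} [RCLike 𝕜] (c k : 𝕜) (A : ℤ → ℤ → 𝕜) : Prop where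
  eq_zero : ∀ i j : ℤ, (i ≤ 0 ∨ j ≤ 0) → (i, j) ≠ (0, 0) → A i j = 0
  recurrence : ∀ i j : ℤ, 1 ≤ i → 1 ≤ j →
    (i : 𝕜) * (j : 𝕜) * A i j + c * A (i - 1) (j - 1)
      - k * A (i - 1) (j - 2) + k * A (i - 2) (j - 1) = 0

namespace RiemannCoeffs

variable {𝕜 : Type*} [RCLike 𝕜] {A : ℤ → ℤ → 𝕜} {c k : 𝕜}

lemma mul_norm_le (hA : RiemannCoeffs c k A) {i j : ℤ} (hi : 1 ≤ i) (hj : 1 ≤ j) :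
    i * j * ‖A i j‖ ≤ ‖c‖ * ‖A (i - 1) (j - 1)‖ + ‖k‖ * ‖A (i - 1) (j - 2)‖
      + ‖k‖ * ‖A (i - 2) (j - 1)‖ := by
  have h : (i : 𝕜) * j * A i j
      = -(c * A (i - 1) (j - 1)) + k * A (i - 1) (j - 2) - k * A (i - 2) (j - 1) := by
    linear_combination hA.recurrence i j hi hj
  have norm_cast_of_nonneg (n : ℤ) (hn : 0 ≤ n) : ‖(n : 𝕜)‖ = n := by
    lift n to ℕ using hn
    simp
  calc (i : ℝ) * j * ‖A i j‖ = ‖(i : 𝕜) * j * A i j‖ := by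
        rw [norm_mul, norm_mul, norm_cast_of_nonneg i (by omega),
          norm_cast_of_nonneg j (by omega)]
    _ ≤ _ := by
        rw [h]
        refine (norm_sub_le _ _).trans ?_
        grw [norm_add_le, norm_neg, norm_mul, norm_mul, norm_mul]

lemma norm_mul_halfFactorial_le_of_nonpos (hA : RiemannCoeffs c k A) {M : ℝ} (hM : 0 ≤ M)
    {i j : ℤ} (hij : i ≤ 0 ∨ j ≤ 0) :
    ‖A i j‖ * (halfFactorial i.toNat * halfFactorial j.toNat)
      ≤ ‖A 0 0‖ * M ^ (i.toNat + j.toNat) := by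
  by_cases h00 : (i, j) = (0, 0)
  · simp_all [halfFactorial]
  · rw [hA.eq_zero i j hij h00, norm_zero, zero_mul]
    positivity

lemma norm_mul_halfFactorial_le_of_predecessors (hA : RiemannCoeffs c k A) {M : ℝ}
    (hM : 1 ≤ M) (hcM : ‖c‖ + 2 * ‖k‖ ≤ M ^ 2) {m n : ℕ} (hm : 1 ≤ m) (hn : 1 ≤ n)
    (ih : ∀ p q : ℤ, p.toNat + q.toNat ≤ m + n - 2 →
      ‖A p q‖ * (halfFactorial p.toNat * halfFactorial q.toNat)
        ≤ ‖A 0 0‖ * M ^ (p.toNat + q.toNat)) :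
    ‖A m n‖ * (halfFactorial m * halfFactorial n) ≤ ‖A 0 0‖ * M ^ (m + n) := by
  set C := ‖A 0 0‖
  have shifted (p q : ℤ) (hpq : p.toNat + q.toNat ≤ m + n - 2)
      (hp : halfFactorial m ≤ m * halfFactorial p.toNat)
      (hq : halfFactorial n ≤ n * halfFactorial q.toNat) :
      ‖A p q‖ * (halfFactorial m * halfFactorial n) ≤ m * n * (C * M ^ (m + n - 2)) :=
    calc ‖A p q‖ * (halfFactorial m * halfFactorial n)
        ≤ ‖A p q‖ * ((m * halfFactorial p.toNat) * (n * halfFactorial q.toNat)) := by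
          gcongr <;> exact_mod_cast ‹_›
      _ = m * n * (‖A p q‖ * (halfFactorial p.toNat * halfFactorial q.toNat)) := by ring
      _ ≤ m * n * (C * M ^ (p.toNat + q.toNat)) :=
          mul_le_mul_of_nonneg_left (ih p q hpq) (by positivity)
      _ ≤ m * n * (C * M ^ (m + n - 2)) := by grw [pow_le_pow_right₀ hM hpq]
  have toNat_sub_one (l : ℕ) : ((l : ℤ) - 1).toNat = l - 1 := by omega
  have toNat_sub_two (l : ℕ) : ((l : ℤ) - 2).toNat = l - 2 := by omega
  have h₁ := shifted (m - 1) (n - 1) (by omega)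
    (by rw [toNat_sub_one]; exact halfFactorial_le_mul_sub_one hm)
    (by rw [toNat_sub_one]; exact halfFactorial_le_mul_sub_one hn)
  have h₂ := shifted (m - 1) (n - 2) (by omega)
    (by rw [toNat_sub_one]; exact halfFactorial_le_mul_sub_one hm)
    (by rw [toNat_sub_two]; exact halfFactorial_le_mul_sub_two hn)
  have h₃ := shifted (m - 2) (n - 1) (by omega)
    (by rw [toNat_sub_two]; exact halfFactorial_le_mul_sub_two hm)
    (by rw [toNat_sub_one]; exact halfFactorial_le_mul_sub_one hn)
  have hrec := hA.mul_norm_le (i := m) (j := n) (by omega) (by omega)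
  push_cast at hrec
  refine le_of_mul_le_mul_left ?_ (by positivity : (0 : ℝ) < m * n)
  calc (m * n : ℝ) * (‖A m n‖ * (halfFactorial m * halfFactorial n))
      = (m * n * ‖A m n‖) * (halfFactorial m * halfFactorial n) := by ring
    _ ≤ (‖c‖ * ‖A (m - 1 : ℤ) (n - 1 : ℤ)‖ + ‖k‖ * ‖A (m - 1 : ℤ) (n - 2 : ℤ)‖
          + ‖k‖ * ‖A (m - 2 : ℤ) (n - 1 : ℤ)‖) * (halfFactorial m * halfFactorial n) := by
        gcongr
    _ ≤ (‖c‖ + 2 * ‖k‖) * (m * n * (C * M ^ (m + n - 2))) := by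
        linear_combination ‖c‖ * h₁ + ‖k‖ * h₂ + ‖k‖ * h₃
    _ ≤ M ^ 2 * (m * n * (C * M ^ (m + n - 2))) := by gcongr
    _ = m * n * (C * M ^ (m + n)) := by
        rw [← pow_sub_mul_pow M (by omega : 2 ≤ m + n)]
        ring

theorem norm_mul_halfFactorial_le (hA : RiemannCoeffs c k A) {M : ℝ} (hM : 1 ≤ M)
    (hcM : ‖c‖ + 2 * ‖k‖ ≤ M ^ 2) (i j : ℤ) :
    ‖A i j‖ * (halfFactorial i.toNat * halfFactorial j.toNat)
      ≤ ‖A 0 0‖ * M ^ (i.toNat + j.toNat) := by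
  induction hN : i.toNat + j.toNat using Nat.strong_induction_on generalizing i j with
  | _ N ih =>
  subst hN
  by_cases hij : i ≤ 0 ∨ j ≤ 0
  · exact hA.norm_mul_halfFactorial_le_of_nonpos (by linarith) hij
  simp only [not_or, not_le] at hij
  lift i to ℕ using by omega with m
  lift j to ℕ using by omega with n
  simp only [Int.toNat_natCast] at ih ⊢
  exact hA.norm_mul_halfFactorial_le_of_predecessors hM hcM (by omega) (by omega)
    fun p q hpq ↦ ih _ (by omega) p q rfl

theorem summable_norm_mul_pow_mul_pow (hA : RiemannCoeffs c k A) (u v : 𝕜) :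
    Summable fun p : ℕ × ℕ ↦ ‖A p.1 p.2 * u ^ p.1 * v ^ p.2‖ := by
  obtain ⟨M, hM, hcM⟩ : ∃ M : ℝ, 1 ≤ M ∧ ‖c‖ + 2 * ‖k‖ ≤ M ^ 2 :=
    ⟨‖c‖ + 2 * ‖k‖ + 1, by linarith [norm_nonneg c, norm_nonneg k],
      by nlinarith [norm_nonneg c, norm_nonneg k]⟩
  have hseries := ((summable_pow_div_halfFactorial (M * ‖u‖)).mul_of_nonneg
    (summable_pow_div_halfFactorial (M * ‖v‖)) (fun _ ↦ by positivity)
    (fun _ ↦ by positivity)).mul_left ‖A 0 0‖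
  refine hseries.of_nonneg_of_le (fun _ ↦ norm_nonneg _) fun ⟨i, j⟩ ↦ ?_
  have hij := hA.norm_mul_halfFactorial_le hM hcM i j
  simp only [Int.toNat_natCast] at hij
  calc ‖A i j * u ^ i * v ^ j‖ = ‖A i j‖ * ‖u‖ ^ i * ‖v‖ ^ j := by
        simp only [norm_mul, norm_pow]
    _ ≤ ‖A 0 0‖ * M ^ (i + j) / (halfFactorial i * halfFactorial j) * ‖u‖ ^ i * ‖v‖ ^ j := by
        gcongr
        rw [le_div_iff₀ (mul_pos (mod_cast halfFactorial_pos i) (mod_cast halfFactorial_pos j))]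
        exact hij
    _ = ‖A 0 0‖ * ((M * ‖u‖) ^ i / halfFactorial i * ((M * ‖v‖) ^ j / halfFactorial j)) := by
        ring

end RiemannCoeffs

theorem gravityHelmholtz_riemann_series_converges_general
    (c : ℂ)
    (A : ℤ → ℤ → ℂ)
    (hA0 : ∀ i j : ℤ, (i ≤ 0 ∨ j ≤ 0) → (i, j) ≠ (0, 0) → A i j = 0)
    (hArec : ∀ i j : ℤ, 1 ≤ i → 1 ≤ j →
      (i : ℂ) * (j : ℂ) * A i j + c * A (i - 1) (j - 1)
        - (1 / (8 * Complex.I)) * A (i - 1) (j - 2)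
        + (1 / (8 * Complex.I)) * A (i - 2) (j - 1) = 0) :
    ∀ u v : ℂ, Summable (fun p : ℕ × ℕ => ‖A p.1 p.2 * u ^ p.1 * v ^ p.2‖) :=
  RiemannCoeffs.summable_norm_mul_pow_mul_pow ⟨hA0, hArec⟩

/-- The coefficients of the double power series for the Riemann function of
the gravity Helmholtz operator, defined by `A₀₀ = 1`, `Aᵢⱼ = 0` for `i ≤ 0` or `j ≤ 0`
(except `(0,0)`), and the recurrence
`i·j·Aᵢⱼ + c·A_{i-1,j-1} - (1/(8i))·A_{i-1,j-2} + (1/(8i))·A_{i-2,j-1} = 0` for `i, j ≥ 1`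
with `c = E/4 + (z₀-ζ₀)/(8i)`, yield an absolutely summable family `Aᵢⱼ uⁱ vʲ` for all
`u, v ∈ ℂ`; in particular the double power series
`1 + Σᵢ Σⱼ Aᵢⱼ (z-z₀)ⁱ (ζ-ζ₀)ʲ` converges for all `z, ζ ∈ ℂ`. -/
theorem gravityHelmholtz_riemann_series_converges (E z₀ ζ₀ : ℂ)
    (c : ℂ) (hc : c = E / 4 + (z₀ - ζ₀) / (8 * Complex.I))
    (A : ℤ → ℤ → ℂ)
    (hA00 : A 0 0 = 1)
    (hA0 : ∀ i j : ℤ, (i ≤ 0 ∨ j ≤ 0) → (i, j) ≠ (0, 0) → A i j = 0)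
    (hArec : ∀ i j : ℤ, 1 ≤ i → 1 ≤ j →
      (i : ℂ) * (j : ℂ) * A i j + c * A (i - 1) (j - 1)
        - (1 / (8 * Complex.I)) * A (i - 1) (j - 2)
        + (1 / (8 * Complex.I)) * A (i - 2) (j - 1) = 0) :
    ∀ u v : ℂ, Summable (fun p : ℕ × ℕ => ‖A p.1 p.2 * u ^ p.1 * v ^ p.2‖) :=
  gravityHelmholtz_riemann_series_converges_general c A hA0 hArec
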